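/- arXiv:1803.04025 — 2 statements merged into one kernel-verified Lean document; each statement's English description precedes it below -/
import Mathlib

section
/- Let G' be constructed from a directed graph G (with vertex set V, distinguished vertices s,t) and integer m as follows: vertices of G' are pairs (i,v) for 0 ≤ i ≤ m, v ∈ V; edges (i,u) → (i+1,v) for each edge u → v of G and 0 ≤ i ≤ m−1; edges (m,v) → (0,s) for v ≠ t; and a self-loop at (m,t). If a random walk of length m from s in G reaches t with probability at least q, then a random walk of length m + (m+1)·r from (0,s) in G' is at (m,t) at the final step with probability at least 1 − (1−q)^r. -/
/-! The vertex `(m,t)` is absorbing, and a round of `m + 1` steps from `(0,s)` runs a walk of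
length `m` in `G` through the layers and then either stays at `(m,t)` (if that walk ended at `t`)
or jumps back to `(0,s)`. Since every round ends at one of these two vertices, the probability of
not yet being absorbed is multiplicative: after `k` rounds and `L` further steps it equals
`(1 - p)^k · (1 - P_L)`, where `p ≥ q` is the probability that a round ends at `(m,t)`. -/

open scoped ENNReal

noncomputable def walkPMF {V : Type*} (step : V → PMF V) : V → ℕ → PMF V
  | v, 0 => PMF.pure v
  | v, n + 1 => (step v).bind fun u => walkPMF step u n

noncomputable def uniformStep {V : Type*} (N : V → Finset V) (h : ∀ v, (N v).Nonempty) :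
    V → PMF V :=
  fun v => PMF.uniformOfFinset (N v) (h v)

/-- The out-neighbor structure of the layered graph `G'` built from `G` (given by
out-neighbors `N`), vertices `s`, `t`, and parameter `m`: edges `(i,u) → (i+1,v)` for
each edge `u → v` of `G` and `i < m`; edges `(m,v) → (0,s)` for `v ≠ t`; and a
self-loop at `(m,t)`. -/
def layeredN {V : Type*} [DecidableEq V] (m : ℕ) (N : V → Finset V) (s t : V)
    (p : Fin (m + 1) × V) : Finset (Fin (m + 1) × V) :=
  if h : (p.1 : ℕ) < m then
    (N p.2).image fun v => (⟨(p.1 : ℕ) + 1, by omega⟩, v)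
  else if p.2 = t then {p} else {(⟨0, by omega⟩, s)}

section Walk

variable {V : Type*} (step : V → PMF V)

lemma walkPMF_add (v : V) (a b : ℕ) :
    walkPMF step v (a + b) = (walkPMF step v a).bind fun u => walkPMF step u b := by
  induction a generalizing v with
  | zero => simp only [walkPMF, zero_add, PMF.pure_bind]
  | succ a ih => simp only [Nat.add_right_comm a 1 b, walkPMF, ih, PMF.bind_bind]

lemma walkPMF_succ' (v : V) (n : ℕ) :
    walkPMF step v (n + 1) = (walkPMF step v n).bind step := by
  rw [walkPMF_add step v n 1]
  simp only [walkPMF, PMF.bind_pure]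

variable {step}

lemma walkPMF_eq_pure_of_step_eq_pure {b : V} (hb : step b = PMF.pure b) (n : ℕ) :
    walkPMF step b n = PMF.pure b := by
  induction n with
  | zero => rfl
  | succ n ih => rw [walkPMF, hb, PMF.pure_bind, ih]

lemma one_sub_walkPMF_add {a b : V} (hb : step b = PMF.pure b) {n : ℕ}
    (hround : (walkPMF step a n).support ⊆ {a, b}) (L : ℕ) :
    1 - walkPMF step a (n + L) b = (1 - walkPMF step a n b) * (1 - walkPMF step a L b) := by
  classical
  obtain rfl | hab := eq_or_ne a b
  · simp [walkPMF_eq_pure_of_step_eq_pure hb]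
  have hzero : ∀ u ∉ ({a, b} : Finset V), walkPMF step a n u = 0 := fun u hu =>
    PMF.apply_eq_zero_iff _ _ |>.2 fun hu' => hu (by simpa using hround hu')
  have htotal : walkPMF step a n a + walkPMF step a n b = 1 := by
    rw [← PMF.tsum_coe (walkPMF step a n), tsum_eq_sum hzero, Finset.sum_pair hab]
  have hsplit : walkPMF step a (n + L) b
      = walkPMF step a n a * walkPMF step a L b + walkPMF step a n b := by
    rw [walkPMF_add, PMF.bind_apply, tsum_eq_sum (s := {a, b}) fun u hu => by simp [hzero u hu],
      Finset.sum_pair hab, walkPMF_eq_pure_of_step_eq_pure hb, PMF.pure_apply_self, mul_one]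
  have hstay : 1 - walkPMF step a n b = walkPMF step a n a :=
    ENNReal.sub_eq_of_eq_add (PMF.apply_ne_top _ _) htotal.symm
  rw [hsplit, add_comm, ← tsub_tsub, hstay,
    ENNReal.mul_sub fun _ _ => PMF.apply_ne_top _ _, mul_one]

lemma one_sub_walkPMF_add_mul {a b : V} (hb : step b = PMF.pure b) {n : ℕ}
    (hround : (walkPMF step a n).support ⊆ {a, b}) (L k : ℕ) :
    1 - walkPMF step a (L + n * k) b
      = (1 - walkPMF step a n b) ^ k * (1 - walkPMF step a L b) := by
  induction k with
  | zero => simp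
  | succ k ih =>
    rw [show L + n * (k + 1) = n + (L + n * k) by ring, one_sub_walkPMF_add hb hround, ih]
    ring

theorem one_sub_pow_le_walkPMF {a b : V} (hb : step b = PMF.pure b) {n : ℕ}
    (hround : (walkPMF step a n).support ⊆ {a, b}) {q : ℝ≥0∞}
    (hq : q ≤ walkPMF step a n b) (L k : ℕ) :
    1 - (1 - q) ^ k ≤ walkPMF step a (L + n * k) b := by
  rw [tsub_le_iff_tsub_le, one_sub_walkPMF_add_mul hb hround]
  calc (1 - walkPMF step a n b) ^ k * (1 - walkPMF step a L b) ≤ (1 - q) ^ k * 1 := by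
        gcongr
        exact tsub_le_self
    _ = (1 - q) ^ k := mul_one _

end Walk

lemma PMF.apply_le_map_apply {α β : Type*} {f : α → β} (p : PMF α) {a : α} {b : β}
    (hb : f a = b) : p a ≤ p.map f b := by
  rw [PMF.map_apply]
  exact le_of_eq_of_le (if_pos hb.symm).symm (ENNReal.le_tsum a)

lemma PMF.uniformOfFinset_singleton {α : Type*} (a : α) (h : ({a} : Finset α).Nonempty) :
    PMF.uniformOfFinset {a} h = PMF.pure a := by
  ext b
  by_cases hb : b = a <;> simp [hb]

lemma PMF.uniformOfFinset_image {α β : Type*} [DecidableEq β] {f : α → β}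
    (hf : Function.Injective f) {s : Finset α} (hs : s.Nonempty) (hs' : (s.image f).Nonempty) :
    PMF.uniformOfFinset (s.image f) hs' = (PMF.uniformOfFinset s hs).map f := by
  ext b
  rw [PMF.map_apply]
  by_cases hb : b ∈ s.image f
  · obtain ⟨a, ha, rfl⟩ := Finset.mem_image.1 hb
    refine Eq.trans ?_ (tsum_eq_single a fun a' ha' => if_neg fun h => ha' (hf h).symm).symm
    rw [if_pos rfl, PMF.uniformOfFinset_apply_of_mem _ hb, PMF.uniformOfFinset_apply_of_mem _ ha,
      Finset.card_image_of_injective _ hf]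
  · rw [PMF.uniformOfFinset_apply_of_notMem _ hb]
    refine (ENNReal.summable.tsum_eq_zero_iff.2 fun a => ?_).symm
    simp only [ite_eq_right_iff]
    rintro rfl
    exact PMF.uniformOfFinset_apply_of_notMem hs fun ha => hb (Finset.mem_image_of_mem f ha)

section Layered

variable {V : Type*} [DecidableEq V] {N : V → Finset V} (hN : ∀ v, (N v).Nonempty)
  {s t : V} {m : ℕ} (hNE : ∀ p, (layeredN m N s t p).Nonempty)

lemma uniformStep_layeredN_of_lt {i : ℕ} (hi : i < m) (v : V) :
    uniformStep (layeredN m N s t) hNE (⟨i, by omega⟩, v)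
      = (uniformStep N hN v).map fun u => (⟨i + 1, by omega⟩, u) := by
  simp only [uniformStep, layeredN, dif_pos hi]
  exact PMF.uniformOfFinset_image (fun _ _ h => (Prod.mk.inj h).2) (hN v) _

lemma uniformStep_layeredN_last (v : V) :
    uniformStep (layeredN m N s t) hNE (⟨m, Nat.lt_succ_self m⟩, v)
      = PMF.pure (if v = t then (⟨m, Nat.lt_succ_self m⟩, t) else (⟨0, Nat.succ_pos m⟩, s)) := by
  simp only [uniformStep, layeredN, dif_neg (lt_irrefl m)]
  split_ifs with hv
  · subst hv
    exact PMF.uniformOfFinset_singleton _ _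
  · exact PMF.uniformOfFinset_singleton _ _

lemma walkPMF_layeredN_of_le {n : ℕ} (hn : n ≤ m) :
    walkPMF (uniformStep (layeredN m N s t) hNE) (⟨0, Nat.succ_pos m⟩, s) n
      = (walkPMF (uniformStep N hN) s n).map fun u => (⟨n, by omega⟩, u) := by
  induction n with
  | zero => exact (PMF.pure_map _ _).symm
  | succ n ih =>
    rw [walkPMF_succ', ih (by omega), PMF.bind_map, walkPMF_succ', PMF.map_bind]
    congr 1
    funext u
    exact uniformStep_layeredN_of_lt hN hNE (by omega) u

lemma walkPMF_layeredN_round :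
    walkPMF (uniformStep (layeredN m N s t) hNE) (⟨0, Nat.succ_pos m⟩, s) (m + 1)
      = (walkPMF (uniformStep N hN) s m).map fun u =>
          if u = t then (⟨m, Nat.lt_succ_self m⟩, t) else (⟨0, Nat.succ_pos m⟩, s) := by
  rw [walkPMF_succ', walkPMF_layeredN_of_le hN hNE le_rfl, PMF.bind_map, ← PMF.bind_pure_comp]
  congr 1
  funext u
  exact uniformStep_layeredN_last hNE u

end Layered

theorem layered_graph_amplification_general {V : Type*} [DecidableEq V]
    (N : V → Finset V) (hN : ∀ v, (N v).Nonempty) (s t : V) (m : ℕ)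
    (hNE : ∀ p, (layeredN m N s t p).Nonempty)
    (q : ℝ≥0∞)
    (hhit : q ≤ walkPMF (uniformStep N hN) s m t)
    (r : ℕ) :
    1 - (1 - q) ^ r
      ≤ walkPMF (uniformStep (layeredN m N s t) hNE)
          (⟨0, Nat.succ_pos m⟩, s) (m + (m + 1) * r)
          (⟨m, Nat.lt_succ_self m⟩, t) := by
  have habsorb : uniformStep (layeredN m N s t) hNE (⟨m, Nat.lt_succ_self m⟩, t)
      = PMF.pure (⟨m, Nat.lt_succ_self m⟩, t) := by
    simpa using uniformStep_layeredN_last hNE t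
  have hround := walkPMF_layeredN_round hN hNE (s := s) (t := t)
  refine one_sub_pow_le_walkPMF habsorb ?_ ?_ m r
  · rw [hround, PMF.support_map]
    rintro _ ⟨u, -, rfl⟩
    dsimp only
    split_ifs <;> simp
  · rw [hround]
    exact hhit.trans (PMF.apply_le_map_apply _ (if_pos rfl))

/-- If a random walk of length `m` from `s` in `G` ends at `t` with probability at
least `q`, then a random walk of length `m + (m+1)·r` from `(0,s)` in the layered
graph `G'` is at `(m,t)` at the final step with probability at least `1 − (1−q)^r`. -/
theorem layered_graph_amplification {V : Type*} [DecidableEq V]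
    (N : V → Finset V) (hN : ∀ v, (N v).Nonempty) (s t : V) (m : ℕ)
    (hNE : ∀ p, (layeredN m N s t p).Nonempty)
    (q : ℝ≥0∞) (hq : q ≤ 1)
    (hhit : q ≤ walkPMF (uniformStep N hN) s m t)
    (r : ℕ) :
    1 - (1 - q) ^ r
      ≤ walkPMF (uniformStep (layeredN m N s t) hNE)
          (⟨0, Nat.succ_pos m⟩, s) (m + (m + 1) * r)
          (⟨m, Nat.lt_succ_self m⟩, t) :=
  layered_graph_amplification_general N hN s t m hNE q hhit r
end

section
/- In Algorithm for undirected connectivity: let G be a finite undirected graph with vertices labeled 1..n, and for a vertex v and target w define the destination sequence of v as (t, c₁, ..., c_i), where c_{j+1} is the least label k such that deleting vertices {1,...,k} \ {v, c_j} disconnects v from c_j but deleting {1,...,k−1} \ {v, c_j} does not. Then if u' is the vertex the algorithm moves to from u (u' adjacent to u and u' equals the last entry of u's destination sequence), the destination sequence of u' is strictly greater than that of u in the order where sequences agreeing on a prefix compare by prefix-deletion-or-larger-next-entry; consequently the algorithm never visits the same vertex twice. -/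
/-- Reachability in the subgraph of `G` induced on the vertex set `S`. -/
def ReachIn {n : ℕ} (G : SimpleGraph (Fin n)) (S : Set (Fin n)) (v w : Fin n) : Prop :=
  Relation.ReflTransGen (fun a b => G.Adj a b ∧ a ∈ S ∧ b ∈ S) v w

/-- Deleting the vertices with labels `≤ k`, except for `v` and `w` themselves,
disconnects `v` from `w`. -/
def Separates {n : ℕ} (G : SimpleGraph (Fin n)) (v w k : Fin n) : Prop :=
  ¬ ReachIn G {x | x = v ∨ x = w ∨ k < x} v w

/-- `k` is the least threshold whose deletion separates `v` from `w`: deleting labels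
up to `k` (keeping `v, w`) disconnects `v` from `w`, but no smaller threshold does. -/
def IsStep {n : ℕ} (G : SimpleGraph (Fin n)) (v w k : Fin n) : Prop :=
  Separates G v w k ∧ ∀ k' < k, ¬ Separates G v w k'

/-- `L` is the destination sequence of `v` (with global target `t`): `L` starts at
`t`, each entry is followed by the minimal separating threshold for `v` and that
entry, `v` is not adjacent to any entry except the last, and `v` is adjacent to the
last entry (which is the vertex the algorithm moves to). -/
def IsDestSeq {n : ℕ} (G : SimpleGraph (Fin n)) (t v : Fin n) (L : List (Fin n)) : Prop :=
  (∃ rest, L = t :: rest ∧ List.Chain (IsStep G v) t rest) ∧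
  (∀ u' ∈ L.dropLast, ¬ G.Adj v u') ∧
  (∀ u', L.getLast? = some u' → G.Adj v u')

/-- `SeqGT C D` means sequence `C` is greater than `D`: either `C` is a proper prefix
of `D`, or at the first index where they differ, `C` has the larger entry. -/
def SeqGT {α : Type*} [LT α] (C D : List α) : Prop :=
  (C <+: D ∧ C ≠ D) ∨ ∃ (p : List α) (a b : α), b < a ∧ (p ++ [a]) <+: C ∧ (p ++ [b]) <+: D


/-!
Let `t = c₀, c₁, …, cᵢ = u'` be the destination sequence of `u`. The sequence of `u'` also starts
at `t`. It is not equal to that of `u`, as `u'` is not adjacent to itself, and it does not properly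
extend it, as no threshold separates `u'` from itself. Otherwise it first differs from it at some
`a ≠ cⱼ`, both minimal thresholds for the common entry `cⱼ₋₁`. Minimality of a threshold `k`
forces every path just above `k - 1` through `k`, which yields a path from `k` back to the
previous entry avoiding the labels below `k`. The thresholds `cⱼ < cⱼ₊₁ < ⋯` increase, so
these paths join `u'` to `cⱼ₋₁` avoiding all other labels below `cⱼ`; hence the threshold `a`
for `u'` exceeds `cⱼ`. Destination sequences thus strictly increase along a walk of the algorithm, which therefore
never revisits a vertex.
-/

open List Relation

section Graph

variable {n : ℕ} {G : SimpleGraph (Fin n)} {S T : Set (Fin n)} {u u' v w c k k' : Fin n}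

namespace ReachIn

theorem mono (hST : S ⊆ T) (h : ReachIn G S v w) : ReachIn G T v w :=
  ReflTransGen.mono (fun _ _ hab => ⟨hab.1, hST hab.2.1, hST hab.2.2⟩) _ _ h

theorem symm (h : ReachIn G S v w) : ReachIn G S w v :=
  have : Std.Symm (fun a b => G.Adj a b ∧ a ∈ S ∧ b ∈ S) :=
    ⟨fun _ _ hab => ⟨hab.1.symm, hab.2.2, hab.2.1⟩⟩
  ReflTransGen.stdSymm.symm _ _ h

theorem mem_of_mem (h : ReachIn G S v w) (hv : v ∈ S) : w ∈ S := by
  induction h with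
  | refl => exact hv
  | tail _ hstep _ => exact hstep.2.2

-- Cut the path at its last visit to `k` or `v`.
theorem from_insert_of_not_reachIn (hv : v ∈ S) (h : ReachIn G (insert k S) v w)
    (hS : ¬ ReachIn G S v w) : ReachIn G (insert k (S \ {v})) k w := by
  suffices ∀ b, ReachIn G (insert k S) v b →
      ReachIn G S v b ∨ ReachIn G (insert k (S \ {v})) k b from
    (this w h).resolve_left hS
  intro b hb
  induction hb with
  | refl => exact Or.inl .refl
  | @tail a b _ hab ih =>
    by_cases hbv : b = v
    · exact Or.inl (hbv ▸ .refl)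
    obtain rfl | hbS := hab.2.2
    · exact Or.inr .refl
    exact ih.imp (fun h => h.tail ⟨hab.1, h.mem_of_mem hv, hbS⟩)
      (fun h => h.tail ⟨hab.1, h.mem_of_mem (Set.mem_insert k _), Or.inr ⟨hbS, hbv⟩⟩)

end ReachIn

theorem Separates.mono (hkk : k ≤ k') (h : Separates G v w k) : Separates G v w k' :=
  fun hr => h (hr.mono fun x hx => by grind)

theorem Separates.symm (h : Separates G v w k) : Separates G w v k :=
  fun hr => h (hr.symm.mono fun x hx => by grind)

theorem not_separates_self : ¬ Separates G v v k :=
  fun h => h .refl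

namespace IsStep

theorem symm (h : IsStep G v w k) : IsStep G w v k :=
  ⟨h.1.symm, fun k' hk' hs => h.2 k' hk' hs.symm⟩

theorem reachIn_of_not_isMin (h : IsStep G v w k) (hk : ¬ IsMin k) :
    ReachIn G {x | x = v ∨ x = w ∨ k ≤ x} v w := by
  have := not_not.1 (h.2 _ (Order.pred_lt_of_not_isMin hk))
  simpa only [Separates, Order.pred_lt_iff_of_not_isMin hk] using this

-- By minimality of `k`, every path from `v` to `w` above `k - 1` has to pass through `k`.
theorem reachIn_from_threshold (h : IsStep G v w k) (hk : ¬ IsMin k) :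
    ReachIn G {x | x = w ∨ x = k ∨ k < x} k w := by
  have hreach := (h.reachIn_of_not_isMin hk).mono
    (T := insert k {x | x = v ∨ x = w ∨ k < x}) fun x hx => by grind
  exact (ReachIn.from_insert_of_not_reachIn (Or.inl rfl) hreach h.1).mono fun x hx => by grind

theorem lt_of_isStep (h : IsStep G v w k) (hk : ¬ IsMin k) (h' : IsStep G v k k') : k < k' :=
  not_le.1 fun hle => h'.1.mono hle (h.symm.reachIn_from_threshold hk).symm

end IsStep

-- From `m` on the chain increases, so the threshold paths of consecutive entries glue together.
theorem reachIn_getLast_of_isChain :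
    ∀ {M : List (Fin n)} {c m z : Fin n}, IsChain (IsStep G v) (c :: m :: M) → ¬ IsMin m →
      (m :: M).getLast? = some z → ReachIn G {x | x = c ∨ m ≤ x} z c
  | [], c, m, z, hch, hm, hlast => by
    obtain rfl : m = z := by simpa using hlast
    exact ((isChain_cons_cons.1 hch).1.reachIn_from_threshold hm).mono fun x hx => by grind
  | m' :: M, c, m, z, hch, hm, hlast => by
    obtain ⟨hcm, hch'⟩ := isChain_cons_cons.1 hch
    have hmm' : m < m' := hcm.lt_of_isStep hm (isChain_cons_cons.1 hch').1
    have ih := reachIn_getLast_of_isChain hch' (not_isMin_of_lt hmm') (by simpa using hlast)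
    exact (ih.mono fun x hx => by grind).trans
      ((hcm.reachIn_from_threshold hm).mono fun x hx => by grind)

theorem IsStep.le_of_isChain {a b : Fin n} {M : List (Fin n)} (ha : IsStep G u' c a)
    (hb : IsChain (IsStep G u) (c :: b :: M)) (hlast : (b :: M).getLast? = some u') : b ≤ a :=
  not_lt.1 fun hab => ha.1 <|
    (reachIn_getLast_of_isChain hb (not_isMin_of_lt hab) hlast).mono fun x hx => by grind

end Graph

section Lists

variable {α : Type*}

theorem List.prefix_or_eq_append_cons_or_diverge : ∀ (L M : List α),
    L <+: M ∨ (∃ d s, L = M ++ d :: s) ∨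
      ∃ p a b s s', a ≠ b ∧ L = p ++ a :: s ∧ M = p ++ b :: s'
  | [], _ => Or.inl nil_prefix
  | d :: s, [] => Or.inr (Or.inl ⟨d, s, rfl⟩)
  | x :: L, y :: M => by
    by_cases hxy : x = y
    · subst hxy
      rcases prefix_or_eq_append_cons_or_diverge L M with
        h | ⟨d, s, h⟩ | ⟨p, a, b, s, s', hab, hL, hM⟩
      · exact Or.inl (cons_prefix_cons.2 ⟨rfl, h⟩)
      · exact Or.inr (Or.inl ⟨d, s, by simp [h]⟩)
      · exact Or.inr (Or.inr ⟨x :: p, a, b, s, s', hab, by simp [hL], by simp [hM]⟩)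
    · exact Or.inr (Or.inr ⟨[], x, y, L, M, hxy, rfl, rfl⟩)

-- Closing a sequence off with `⊤` turns `SeqGT` into the reverse lexicographic order.
def withSentinel (L : List α) : List (WithTop α) :=
  L.map WithTop.some ++ [⊤]

theorem SeqGT.withSentinel_lt [LT α] {C D : List α} (h : SeqGT C D) :
    withSentinel D < withSentinel C := by
  rcases h with ⟨⟨s, rfl⟩, hne⟩ | ⟨p, a, b, hba, ⟨s, rfl⟩, ⟨s', rfl⟩⟩
  · obtain ⟨d, s, rfl⟩ := exists_cons_of_ne_nil (by simpa using hne)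
    simpa [withSentinel] using
      append_left_lt (cons_lt_cons_iff.2 (Or.inl (WithTop.coe_lt_top d)))
  · simpa [withSentinel] using
      append_left_lt (cons_lt_cons_iff.2 (Or.inl (WithTop.coe_lt_coe.2 hba)))

theorem List.append_cons_eq_cons_append {t c : α} {p q l : List α}
    (h : t :: p = q ++ [c]) : q ++ c :: l = t :: (p ++ l) := by
  rw [← cons_append, h, append_assoc]; rfl

theorem List.IsChain.nodup {R : α → α → Prop} [Trans R R R] (hirr : ∀ a, ¬ R a a) {l : List α}
    (h : IsChain R l) : l.Nodup :=
  h.pairwise.imp fun hab => by rintro rfl; exact hirr _ hab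

end Lists

section DestSeq

variable {n : ℕ} {G : SimpleGraph (Fin n)} {t u u' : Fin n}

theorem IsDestSeq.seqGT {L L' : List (Fin n)} (hL : IsDestSeq G t u L)
    (hL' : IsDestSeq G t u' L') (hlast : L.getLast? = some u') : SeqGT L' L := by
  obtain ⟨⟨r, rfl, hr⟩, -, -⟩ := hL
  obtain ⟨⟨r', rfl, hr'⟩, -, hadj'⟩ := hL'
  rcases prefix_or_eq_append_cons_or_diverge r' r with
    hpre | ⟨d, s, rfl⟩ | ⟨p, a, b, s', s, hab, rfl, rfl⟩
  · exact Or.inl ⟨cons_prefix_cons.2 ⟨rfl, hpre⟩,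
      fun heq => G.irrefl (hadj' u' (heq ▸ hlast))⟩
  · -- `u'` would be followed by itself in its own chain
    have hr' : IsChain (IsStep G u') ((t :: r) ++ d :: s) := hr'
    exact (not_separates_self ((isChain_append.1 hr').2.2 u' hlast d rfl).1).elim
  · obtain ⟨q, c, hqc⟩ : ∃ q c, t :: p = q ++ [c] :=
      (eq_nil_or_concat' _).resolve_left (cons_ne_nil _ _)
    have hr : IsChain (IsStep G u) (q ++ c :: b :: s) := by
      rw [append_cons_eq_cons_append hqc]; exact hr
    have hr' : IsChain (IsStep G u') (q ++ c :: a :: s') := by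
      rw [append_cons_eq_cons_append hqc]; exact hr'
    have hlast : (b :: s).getLast? = some u' := by
      simpa [← cons_append, hqc, getLast?_append] using hlast
    have hba :=
      (isChain_cons_cons.1 hr'.right_of_append).1.le_of_isChain hr.right_of_append hlast
    exact Or.inr ⟨t :: p, a, b, lt_of_le_of_ne hba (Ne.symm hab), ⟨s', by simp⟩, ⟨s, by simp⟩⟩

theorem nodup_of_isChain_destSeq_moves {P : List (Fin n)}
    (hP : IsChain (fun a b => ∃ L, IsDestSeq G t a L ∧ L.getLast? = some b) P) : P.Nodup := by
  let R a b := ∃ La, IsDestSeq G t a La ∧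
    ∀ Lb, IsDestSeq G t b Lb → withSentinel La < withSentinel Lb
  have : Trans R R R := ⟨fun ⟨La, hLa, hab⟩ ⟨Lb, hLb, hbc⟩ =>
    ⟨La, hLa, fun Lc hLc => (hab Lb hLb).trans (hbc Lc hLc)⟩⟩
  refine IsChain.nodup (R := R) (by rintro a ⟨La, hLa, haa⟩; exact lt_irrefl _ (haa La hLa)) ?_
  exact hP.imp fun {_ _} ⟨L, hL, hlast⟩ =>
    ⟨L, hL, fun _ hL' => (hL.seqGT hL' hlast).withSentinel_lt⟩

end DestSeq

/-- In the undirected-connectivity algorithm: if `u'` is the vertex the algorithm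
moves to from `u` (`u'` adjacent to `u` and equal to the last entry of `u`'s
destination sequence), then the destination sequence of `u'` is strictly greater
than that of `u`; consequently the algorithm never visits the same vertex twice. -/
theorem destination_sequence_increases {n : ℕ} (G : SimpleGraph (Fin n)) (t : Fin n) :
    (∀ (u u' : Fin n) (L L' : List (Fin n)),
        IsDestSeq G t u L → IsDestSeq G t u' L' → L.getLast? = some u' →
        SeqGT L' L) ∧
    (∀ P : List (Fin n),
        P.Chain' (fun a b => ∃ L, IsDestSeq G t a L ∧ L.getLast? = some b) →
        P.Nodup) :=
  ⟨fun _ _ _ _ hL hL' hlast => hL.seqGT hL' hlast, fun _ hP => nodup_of_isChain_destSeq_moves hP⟩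
end
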